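/- For distinct complex numbers a, b₁, b₂ in a neighborhood where all factors are defined, the function J*(a; b₁, b₂) := e^{−N(a+b₁)} z(a+b₁) z(−a−b₁) ((z'/z)(b₂−b₁) − (z'/z)(b₂+a)) + e^{−N(a+b₂)} z(a+b₂) z(−a−b₂) ((z'/z)(b₁−b₂) − (z'/z)(b₁+a)) is regular at b₁ = b₂: the apparent poles of (z'/z)(b₂−b₁) and (z'/z)(b₁−b₂) cancel, so J* extends holomorphically across the diagonal b₁ = b₂. -/

import Mathlib

/-! With the weight `W(x) = e^{-N(a+x)} z(a+x) z(-a-x)`, the identities `z'/z(u) = z(-u)` and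
`z(u) + z(-u) = 1` give, for `b` near `c`,
`J*(a; b, c) = (W(b) - W(c)) z(b - c) + W(c) - W(b) z(-(c+a)) - W(c) z(-(b+a))`.
The last three terms are regular at `b = c`. In the first, the simple pole of `z(b - c)` meets
the zero of `W(b) - W(c)`: it is the quotient of increments `(W(b) - W(c)) / (g(b) - g(c))` with
`g(b) = -e^{c-b}`, `g'(c) = 1`, i.e. the ratio of the two (analytic) divided differences. -/

open Filter Topology

/-- `z(x) = 1/(1 - e^{-x})`. -/
noncomputable def zfun (x : ℂ) : ℂ := (1 - Complex.exp (-x))⁻¹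

/-- The logarithmic derivative `z'/z`. -/
noncomputable def zlog (x : ℂ) : ℂ := deriv zfun x / zfun x

/-- The triple-correlation kernel
`J*(a;b₁,b₂) = e^{-N(a+b₁)} z(a+b₁)z(-a-b₁)((z'/z)(b₂-b₁) - (z'/z)(b₂+a))
             + e^{-N(a+b₂)} z(a+b₂)z(-a-b₂)((z'/z)(b₁-b₂) - (z'/z)(b₁+a))`. -/
noncomputable def Jstar3 (N : ℕ) (a b₁ b₂ : ℂ) : ℂ :=
  Complex.exp (-(N : ℂ) * (a + b₁)) * zfun (a + b₁) * zfun (-(a + b₁)) *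
      (zlog (b₂ - b₁) - zlog (b₂ + a))
    + Complex.exp (-(N : ℂ) * (a + b₂)) * zfun (a + b₂) * zfun (-(a + b₂)) *
      (zlog (b₁ - b₂) - zlog (b₁ + a))

section RemovableQuotient

variable {𝕜 : Type*} [NontriviallyNormedField 𝕜]

theorem analyticAt_dslope {E : Type*} [NormedAddCommGroup E] [NormedSpace 𝕜 E]
    {f : 𝕜 → E} {c : 𝕜} (hf : AnalyticAt 𝕜 f c) : AnalyticAt 𝕜 (dslope f c) c :=
  let ⟨_, hp⟩ := hf
  ⟨_, hp.has_fpower_series_dslope_fslope⟩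

theorem exists_analyticAt_eq_sub_div_sub {f g : 𝕜 → 𝕜} {c g' : 𝕜} (hf : AnalyticAt 𝕜 f c)
    (hg : AnalyticAt 𝕜 g c) (hg' : HasDerivAt g g' c) (hg'0 : g' ≠ 0) :
    ∃ h : 𝕜 → 𝕜, AnalyticAt 𝕜 h c ∧ ∀ x ≠ c, h x = (f x - f c) / (g x - g c) := by
  refine ⟨dslope f c / dslope g c, (analyticAt_dslope hf).div (analyticAt_dslope hg) ?_, ?_⟩
  · rwa [dslope_same, hg'.deriv]
  · intro x hx
    simp only [Pi.div_apply, dslope_of_ne _ hx, slope_def_field]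
    exact div_div_div_cancel_right₀ (sub_ne_zero.2 hx) _ _

end RemovableQuotient

theorem exp_neg_ne_one_iff {x : ℂ} : Complex.exp (-x) ≠ 1 ↔ Complex.exp x ≠ 1 := by
  rw [Complex.exp_neg, inv_ne_one]

theorem analyticAt_zfun {x : ℂ} (hx : Complex.exp (-x) ≠ 1) : AnalyticAt ℂ zfun x :=
  (analyticAt_const.sub (analyticAt_cexp.comp analyticAt_id.neg)).inv (sub_ne_zero.2 hx.symm)

theorem zlog_eq_zfun_neg {x : ℂ} (hx : Complex.exp x ≠ 1) : zlog x = zfun (-x) := by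
  have h₀ : 1 - Complex.exp (-x) ≠ 0 := sub_ne_zero.2 (exp_neg_ne_one_iff.2 hx).symm
  have hexp : HasDerivAt (fun y => 1 - Complex.exp (-y)) (Complex.exp (-x)) x := by
    simpa using ((Complex.hasDerivAt_exp (-x)).comp x (hasDerivAt_neg x)).const_sub 1
  have hz : HasDerivAt zfun _ x := hexp.inv h₀
  rw [zlog, hz.deriv, zfun, zfun, neg_neg, Complex.exp_neg]
  field_simp
  ring

theorem zfun_add_zfun_neg {x : ℂ} (hx : Complex.exp x ≠ 1) : zfun x + zfun (-x) = 1 := by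
  have h₁ : Complex.exp x - 1 ≠ 0 := sub_ne_zero.2 hx
  rw [zfun, zfun, neg_neg, Complex.exp_neg]
  field_simp
  ring

noncomputable def Jstar3Weight (N : ℕ) (a x : ℂ) : ℂ :=
  Complex.exp (-(N : ℂ) * (a + x)) * zfun (a + x) * zfun (-(a + x))

theorem analyticAt_Jstar3Weight (N : ℕ) {a x : ℂ} (h : Complex.exp (a + x) ≠ 1) :
    AnalyticAt ℂ (Jstar3Weight N a) x := by
  have hax : AnalyticAt ℂ (fun y => a + y) x := analyticAt_const.add analyticAt_id
  have hz₁ : AnalyticAt ℂ (fun y => zfun (a + y)) x :=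
    (analyticAt_zfun (exp_neg_ne_one_iff.2 h)).comp hax
  have hz₂ : AnalyticAt ℂ (fun y => zfun (-(a + y))) x :=
    (analyticAt_zfun (by rwa [neg_neg])).comp hax.neg
  exact ((analyticAt_cexp.comp (analyticAt_const.mul hax)).mul hz₁).mul hz₂

theorem Jstar3_eq_of_exp_ne_one {N : ℕ} {a b₁ b₂ : ℂ} (h₁₂ : Complex.exp (b₁ - b₂) ≠ 1)
    (h₁ : Complex.exp (b₁ + a) ≠ 1) (h₂ : Complex.exp (b₂ + a) ≠ 1) :
    Jstar3 N a b₁ b₂ =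
      (Jstar3Weight N a b₁ - Jstar3Weight N a b₂) * zfun (b₁ - b₂) + Jstar3Weight N a b₂
        - Jstar3Weight N a b₁ * zfun (-(b₂ + a)) - Jstar3Weight N a b₂ * zfun (-(b₁ + a)) := by
  have h₂₁ : Complex.exp (b₂ - b₁) ≠ 1 := by rwa [← neg_sub, exp_neg_ne_one_iff]
  have hsum := zfun_add_zfun_neg h₁₂
  rw [Jstar3, zlog_eq_zfun_neg h₂₁, zlog_eq_zfun_neg h₁₂, zlog_eq_zfun_neg h₁,
    zlog_eq_zfun_neg h₂]
  simp only [neg_sub] at hsum ⊢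
  unfold Jstar3Weight
  linear_combination (Complex.exp (-(N : ℂ) * (a + b₂)) * zfun (a + b₂) * zfun (-(a + b₂))) * hsum

theorem eventually_exp_sub_ne_one (c : ℂ) : ∀ᶠ x in 𝓝[≠] c, Complex.exp (x - c) ≠ 1 :=
  ((Complex.hasDerivAt_exp _).comp c ((hasDerivAt_id c).sub_const c)).eventually_ne (by simp)

theorem Jstar3_regular_on_diagonal_general (N : ℕ) (a c : ℂ)
    (hac : Complex.exp (-(a + c)) ≠ 1) :
    ∃ g : ℂ → ℂ, AnalyticAt ℂ g c ∧
      ∀ᶠ b₁ in 𝓝[≠] c, Jstar3 N a b₁ c = g b₁ := by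
  let W := Jstar3Weight N a
  have hca : Complex.exp (c + a) ≠ 1 := by rwa [add_comm, ← exp_neg_ne_one_iff]
  have hW : AnalyticAt ℂ W c := analyticAt_Jstar3Weight N (exp_neg_ne_one_iff.1 hac)
  have hg : HasDerivAt (fun x => -Complex.exp (c - x)) 1 c := by
    simpa using (((hasDerivAt_id c).const_sub c).cexp).fun_neg
  obtain ⟨q, hq, hq_eq⟩ := exists_analyticAt_eq_sub_div_sub hW
    (analyticAt_const.sub analyticAt_id).cexp.neg hg one_ne_zero
  have hz : AnalyticAt ℂ (fun x => zfun (-(x + a))) c :=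
    (analyticAt_zfun (by rwa [neg_neg])).comp (analyticAt_id.add analyticAt_const).neg
  refine ⟨fun x => q x + W c - W x * zfun (-(c + a)) - W c * zfun (-(x + a)),
    ((hq.add analyticAt_const).sub (hW.mul analyticAt_const)).sub (analyticAt_const.mul hz), ?_⟩
  have hxa : ∀ᶠ x in 𝓝[≠] c, Complex.exp (x + a) ≠ 1 :=
    eventually_nhdsWithin_of_eventually_nhds
      ((Complex.continuous_exp.comp (continuous_add_const a)).continuousAt.eventually_ne hca)
  filter_upwards [self_mem_nhdsWithin, eventually_exp_sub_ne_one c, hxa] with x hxc hx₁ hx₂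
  rw [Jstar3_eq_of_exp_ne_one hx₁ hx₂ hca, hq_eq x hxc]
  simp [W, zfun, div_eq_mul_inv, neg_add_eq_sub]

/-- `J*(a;b₁,b₂)` is regular at `b₁ = b₂`: the simple poles of `(z'/z)(b₂-b₁)` and
`(z'/z)(b₁-b₂)` cancel, and `J*` extends holomorphically across the diagonal. -/
theorem Jstar3_regular_on_diagonal (N : ℕ) (hN : 0 < N) (a c : ℂ)
    (hac : Complex.exp (-(a + c)) ≠ 1) :
    ∃ g : ℂ → ℂ, AnalyticAt ℂ g c ∧
      ∀ᶠ b₁ in 𝓝[≠] c, Jstar3 N a b₁ c = g b₁ :=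
  Jstar3_regular_on_diagonal_general N a c hac
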